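/- Let c be an admissible coefficient function satisfying (Cubic values), (Normalization) and (Separation), and assume a_1 ≥ 2. If a_i = 2 for some i ∈ {1,2,3}, then c(4e_{i,1}, 0) = −1/96. -/

import Mathlib

/- Common framework: Frobenius manifolds for orbifold projective lines ℙ¹_A,
   following Ishibashi–Shiraishi–Takahashi. -/

namespace FrobeniusUniqueness

/-- A point index `(i, j)` labelling a flat coordinate `t_{i,j}`. -/
abbrev Pt : Type := Fin 3 × ℕ

/-- A non-negative element of `ℤ^{μ_A − 2}`: an exponent vector `α` with `α_{i,j} ∈ ℕ`. -/
abbrev Expv : Type := Pt →₀ ℕ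

/-- The standard basis vector `e_{i,j}`. -/
noncomputable def e (i : Fin 3) (j : ℕ) : Expv := Finsupp.single (i, j) 1

/-- The length `|α|` of an exponent vector. -/
def len (α : Expv) : ℕ := α.sum fun _ n => n

/-- A point index `(i,j)` is valid if `1 ≤ j ≤ a_i − 1`. -/
def ValidPt (A : Fin 3 → ℕ) (p : Pt) : Prop := 1 ≤ p.2 ∧ p.2 ≤ A p.1 - 1

/-- An exponent vector lies in `ℤ^{μ_A − 2}` iff it is supported on valid indices. -/
def Valid (A : Fin 3 → ℕ) (α : Expv) : Prop := ∀ p ∈ α.support, ValidPt A p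

/-- The combinatorial factor `s_{a,b,c}`. -/
def sFactor (a b c : ℕ) : ℂ :=
  if a = b ∧ b = c then 6
  else if a ≠ b ∧ b ≠ c ∧ a ≠ c then 1
  else 2

/-- The index type for the flat coordinates `t_1`, `t_{i,j}`, `t_{μ_A}`. -/
inductive Idx : Type where
  | one : Idx
  | pt : Fin 3 → ℕ → Idx
  | mu : Idx
deriving DecidableEq

/-- Validity of a flat coordinate index. -/
def ValidIdx (A : Fin 3 → ℕ) : Idx → Prop
  | .one => True
  | .pt i j => ValidPt A (i, j)
  | .mu => True

/-- The metric `η` in the frame `∂_1, ∂_{i,j}, ∂_{μ_A}`. -/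
noncomputable def eta (A : Fin 3 → ℕ) : Idx → Idx → ℂ
  | .one, .mu => 1
  | .mu, .one => 1
  | .pt i j, .pt i' j' =>
      if i = i' ∧ j + j' = A i ∧ 1 ≤ j ∧ j ≤ A i - 1 then (A i : ℂ)⁻¹ else 0
  | _, _ => 0

/-- The point indices occurring in an `Idx`. -/
def ptsOf : Idx → List Pt
  | .pt i j => [(i, j)]
  | _ => []

/-- The number of occurrences of `μ_A` in an `Idx`. -/
def muCount : Idx → ℕ
  | .mu => 1
  | _ => 0

/-- The factor produced when the monomial `t^{β + Σ_{p ∈ ps} e_p}` is differentiated by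
`∏_{p ∈ ps} ∂_p`, leaving the monomial `t^β`. -/
noncomputable def dfac (β : Expv) : List Pt → ℕ
  | [] => 1
  | p :: ps =>
      ((β + ((ps.map fun q => (Finsupp.single q 1 : Expv)).sum) + Finsupp.single p 1 : Expv) p)
        * dfac β ps

/-- `der A c a b d β m` is the coefficient of `t^β · e^{m·t_{μ_A}}` in `∂_a ∂_b ∂_d F`, where
`F = (1/2)t_1²t_{μ_A} + (1/2)t_1·Σ_{i,j}(1/a_i)t_{i,j}t_{i,a_i−j} + Σ_{α,m} c(α,m)t^α e^{m t_{μ_A}}`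
is the potential of the coefficient function `c`.  In particular `∂_1∂_a∂_b F = η(∂_a,∂_b)`. -/
noncomputable def der (A : Fin 3 → ℕ) (c : Expv → ℕ → ℂ) (a b d : Idx) (β : Expv) (m : ℕ) : ℂ :=
  if a = .one then (if β = 0 ∧ m = 0 then eta A b d else 0)
  else if b = .one then (if β = 0 ∧ m = 0 then eta A a d else 0)
  else if d = .one then (if β = 0 ∧ m = 0 then eta A a b else 0)
  else
    (m : ℂ) ^ (muCount a + muCount b + muCount d) *
      (dfac β (ptsOf a ++ ptsOf b ++ ptsOf d) : ℂ) *
      c (β + (((ptsOf a ++ ptsOf b ++ ptsOf d).map fun q => (Finsupp.single q 1 : Expv)).sum)) m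

/-- The coefficient of `t^β · e^{m·t_{μ_A}}` in
`Σ_{σ,τ} ∂_a∂_b∂_σF · η^{στ} · ∂_τ∂_d∂_e F`, where `(η^{στ})` is the inverse matrix of
`(η_{στ})` (so the only nonzero entries are `η^{1,μ_A} = η^{μ_A,1} = 1` and
`η^{(i,j),(i,a_i−j)} = a_i`). -/
noncomputable def quadTerm (A : Fin 3 → ℕ) (c : Expv → ℕ → ℂ) (a b d e' : Idx)
    (β : Expv) (m : ℕ) : ℂ :=
  ∑ x ∈ Finset.HasAntidiagonal.antidiagonal β, ∑ y ∈ Finset.HasAntidiagonal.antidiagonal m,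
    (der A c a b .one x.1 y.1 * der A c .mu d e' x.2 y.2
     + der A c a b .mu x.1 y.1 * der A c .one d e' x.2 y.2
     + ∑ i : Fin 3, ∑ j ∈ Finset.Icc 1 (A i - 1),
         (A i : ℂ) * der A c a b (.pt i j) x.1 y.1 * der A c (.pt i (A i - j)) d e' x.2 y.2)

/-- `χ_A = 1/a_1 + 1/a_2 + 1/a_3 − 1`. -/
noncomputable def chi (A : Fin 3 → ℕ) : ℚ := (A 0 : ℚ)⁻¹ + (A 1 : ℚ)⁻¹ + (A 2 : ℚ)⁻¹ - 1

/-- The degree of the monomial `t^α`: `Σ_{i,j} α_{i,j}·(a_i − j)/a_i`. -/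
noncomputable def deg (A : Fin 3 → ℕ) (α : Expv) : ℚ :=
  α.sum fun p n => (n : ℚ) * (((A p.1 : ℚ) - (p.2 : ℚ)) / (A p.1 : ℚ))

/-- A coefficient function is admissible if it satisfies (Homogeneity) and the WDVV
equations (coefficientwise, in the variables `t_{i,j}` and `e^{t_{μ_A}}`). -/
structure IsAdmissible (A : Fin 3 → ℕ) (c : Expv → ℕ → ℂ) : Prop where
  homog : ∀ α : Expv, Valid A α → ∀ m : ℕ, c α m ≠ 0 → deg A α + (m : ℚ) * chi A = 2
  wdvv : ∀ a b d e' : Idx, ValidIdx A a → ValidIdx A b → ValidIdx A d → ValidIdx A e' →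
      ∀ β : Expv, Valid A β → ∀ m : ℕ,
        quadTerm A c a b d e' β m = quadTerm A c a d b e' β m

/-- (Cubic values). -/
def CubicValues (A : Fin 3 → ℕ) (c : Expv → ℕ → ℂ) : Prop :=
  (∀ (i₁ i₂ i₃ : Fin 3) (j₁ j₂ j₃ : ℕ),
      ValidPt A (i₁, j₁) → ValidPt A (i₂, j₂) → ValidPt A (i₃, j₃) →
      ¬(i₁ = i₂ ∧ i₂ = i₃) → c (e i₁ j₁ + e i₂ j₂ + e i₃ j₃) 0 = 0) ∧
  (∀ (i : Fin 3) (j₁ j₂ j₃ : ℕ),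
      ValidPt A (i, j₁) → ValidPt A (i, j₂) → ValidPt A (i, j₃) →
      sFactor j₁ j₂ j₃ * c (e i j₁ + e i j₂ + e i j₃) 0 =
        if j₁ + j₂ + j₃ = A i then (A i : ℂ)⁻¹ else 0)

/-- (Normalization). -/
def Normalization (A : Fin 3 → ℕ) (c : Expv → ℕ → ℂ) : Prop :=
  (2 ≤ A 0 → c (e 0 1 + e 1 1 + e 2 1) 1 = 1) ∧
  (A 0 = 1 → A 0 < A 1 → c (e 1 1 + e 2 1) 1 = 1) ∧
  (A 0 = 1 → A 1 = 1 → A 1 < A 2 → c (e 2 1) 1 = 1) ∧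
  (A 0 = 1 → A 1 = 1 → A 2 = 1 → c 0 1 = 1)

/-- (Separation). -/
def Separation (A : Fin 3 → ℕ) (c : Expv → ℕ → ℂ) : Prop :=
  ∀ γ : Expv, Valid A γ →
    ∀ (i₁ i₂ : Fin 3) (j₁ j₂ : ℕ), i₁ ≠ i₂ → ValidPt A (i₁, j₁) → ValidPt A (i₂, j₂) →
      e i₁ j₁ + e i₂ j₂ ≤ γ → c γ 0 = 0

/-- The automorphism of `ℤ^{μ_A−2}` exchanging `e_{i₁,j}` and `e_{i₂,j}` for all `j`. -/
def swapExp (i₁ i₂ : Fin 3) (α : Expv) : Expv :=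
  Finsupp.equivMapDomain ((Equiv.swap i₁ i₂).prodCongr (Equiv.refl ℕ)) α

/-- (Symmetry). -/
def Symmetry (A : Fin 3 → ℕ) (c : Expv → ℕ → ℂ) : Prop :=
  ∀ i₁ i₂ : Fin 3, A i₁ = A i₂ → ∀ α : Expv, Valid A α → ∀ m : ℕ,
    c (swapExp i₁ i₂ α) m = c α m

/-! Read the WDVV equation for `(∂_{i,1}, ∂_{i,1}, ∂_{p,1}, ∂_{q,1})`, with `{i, p, q} = {1, 2, 3}`,
at the coefficient of `t_{i,1} e^{t_{μ_A}}`. Almost every product in it contains a pairing `η`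
between two branches, or a coefficient at `e^{0·t_{μ_A}}` of a monomial meeting two branches,
which vanishes by (Separation). Two products survive, both on the side where `∂_{i,1}` meets
itself: `η(∂_{i,1}, ∂_{i,1}) = 1/2` and `a_i · 4! · c(4e_{i,1}, 0)`, each multiplied by
`c(e_{1,1} + e_{2,1} + e_{3,1}, 1) = 1`; the one through `c(3e_{i,1}, 0)` vanishes by
(Cubic values) as `3 ≠ a_i`. Hence `1/2 + 48 c(4e_{i,1}, 0) = 0`. -/

lemma add_add_eq_sum_fin_three {M : Type*} [AddCommMonoid M] {i p q : Fin 3}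
    (hip : i ≠ p) (hiq : i ≠ q) (hpq : p ≠ q) (f : Fin 3 → M) :
    f i + f p + f q = ∑ k, f k := by
  rw [Fin.sum_univ_three]
  fin_cases i <;> fin_cases p <;> fin_cases q <;> simp_all <;> abel

section

variable {A : Fin 3 → ℕ} {c : Expv → ℕ → ℂ}

lemma validPt_one {k : Fin 3} (h : 2 ≤ A k) : ValidPt A (k, 1) :=
  ⟨le_rfl, by dsimp only; omega⟩

lemma valid_zero : Valid A 0 := fun p hp => by simp at hp

lemma Valid.add {α β : Expv} (hα : Valid A α) (hβ : Valid A β) : Valid A (α + β) :=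
  fun p hp => (Finset.mem_union.mp (Finsupp.support_add hp)).elim (hα p) (hβ p)

lemma Valid.mono {α β : Expv} (h : α ≤ β) (hβ : Valid A β) : Valid A α :=
  fun p hp => hβ p (Finsupp.support_mono h hp)

lemma valid_e {k : Fin 3} {j : ℕ} (h : ValidPt A (k, j)) : Valid A (e k j) :=
  fun _ hp => ((Finsupp.mem_support_single _ _ _).1 hp).1 ▸ h

lemma dfac_replicate (β : Expv) (p : Pt) (n : ℕ) :
    dfac β (List.replicate n p) = (β p + 1).ascFactorial n := by
  induction n with
  | zero => rfl
  | succ n ih =>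
    simp only [List.replicate_succ, dfac, ih, List.map_replicate, List.sum_replicate,
      Finsupp.add_apply, Finsupp.smul_apply, Finsupp.single_eq_same, smul_eq_mul, mul_one,
      Nat.ascFactorial_succ]
    ring

lemma dfac_eq_one {β : Expv} {ps : List Pt} (hnd : ps.Nodup) (hβ : ∀ p ∈ ps, β p = 0) :
    dfac β ps = 1 := by
  induction ps with
  | nil => rfl
  | cons p ps ih =>
    rw [List.nodup_cons] at hnd
    have hps : (ps.map fun q => (Finsupp.single q 1 : Expv)).sum p = 0 := by
      rw [← Finsupp.applyAddHom_apply, map_list_sum, List.map_map]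
      refine List.sum_eq_zero fun n hn => ?_
      obtain ⟨q, hq, rfl⟩ := List.mem_map.mp hn
      exact Finsupp.single_eq_of_ne (fun h => hnd.1 (h ▸ hq))
    simp [dfac, ih hnd.2 fun q hq => hβ q (List.mem_cons_of_mem p hq), hβ p List.mem_cons_self,
      hps]

lemma sum_antidiagonal_single_one {α M : Type*} [DecidableEq α] [AddCommMonoid M] (a : α)
    (f : (α →₀ ℕ) × (α →₀ ℕ) → ℕ × ℕ → M) :
    ∑ x ∈ Finset.HasAntidiagonal.antidiagonal (Finsupp.single a 1),
      ∑ y ∈ Finset.HasAntidiagonal.antidiagonal 1, f x y =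
    f (0, Finsupp.single a 1) (0, 1) + f (0, Finsupp.single a 1) (1, 0) +
      f (Finsupp.single a 1, 0) (0, 1) + f (Finsupp.single a 1, 0) (1, 0) := by
  simp only [Finsupp.antidiagonal_single, Finset.sum_map,
    show Finset.HasAntidiagonal.antidiagonal (1 : ℕ) = {(0, 1), (1, 0)} from rfl,
    Finset.sum_pair (by decide : ((0 : ℕ), (1 : ℕ)) ≠ (1, 0)),
    Function.Embedding.coe_prodMap, Function.Embedding.coeFn_mk, Prod.map_apply,
    Finsupp.single_zero]
  abel

lemma eta_pt_pt_of_ne {k₁ k₂ : Fin 3} (h : k₁ ≠ k₂) (l₁ l₂ : ℕ) :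
    eta A (.pt k₁ l₁) (.pt k₂ l₂) = 0 := by
  simp [eta, h]

lemma der_one_left (b d : Idx) (β : Expv) (m : ℕ) :
    der A c .one b d β m = if β = 0 ∧ m = 0 then eta A b d else 0 :=
  if_pos rfl

lemma der_pt_pt_one (k₁ k₂ : Fin 3) (l₁ l₂ : ℕ) (β : Expv) (m : ℕ) :
    der A c (.pt k₁ l₁) (.pt k₂ l₂) .one β m =
      if β = 0 ∧ m = 0 then eta A (.pt k₁ l₁) (.pt k₂ l₂) else 0 := by
  simp [der]

lemma der_mu_pt_pt (k₁ k₂ : Fin 3) (l₁ l₂ : ℕ) (β : Expv) (m : ℕ) :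
    der A c .mu (.pt k₁ l₁) (.pt k₂ l₂) β m =
      m * dfac β [(k₁, l₁), (k₂, l₂)] * c (β + e k₁ l₁ + e k₂ l₂) m := by
  simp [der, muCount, ptsOf, e, add_assoc]

lemma der_pt_pt_pt (k₁ k₂ k₃ : Fin 3) (l₁ l₂ l₃ : ℕ) (β : Expv) (m : ℕ) :
    der A c (.pt k₁ l₁) (.pt k₂ l₂) (.pt k₃ l₃) β m =
      dfac β [(k₁, l₁), (k₂, l₂), (k₃, l₃)] * c (β + e k₁ l₁ + e k₂ l₂ + e k₃ l₃) m := by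
  simp [der, muCount, ptsOf, e, add_assoc]

lemma der_pt_self (k : Fin 3) (l : ℕ) (β : Expv) (m : ℕ) :
    der A c (.pt k l) (.pt k l) (.pt k l) β m =
      (β (k, l) + 1).ascFactorial 3 * c (β + 3 • e k l) m := by
  rw [der_pt_pt_pt, show [(k, l), (k, l), (k, l)] = List.replicate 3 (k, l) from rfl,
    dfac_replicate, succ_nsmul, two_nsmul, ← add_assoc, ← add_assoc]

lemma der_pt_pt_pt_eq_zero_of_separation (hsep : Separation A c) {β : Expv} (hβ : Valid A β)
    {k₁ k₂ k₃ : Fin 3} {l₁ l₂ l₃ : ℕ} (v₁ : ValidPt A (k₁, l₁)) (v₂ : ValidPt A (k₂, l₂))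
    (v₃ : ValidPt A (k₃, l₃)) (h : ¬(k₁ = k₂ ∧ k₂ = k₃)) :
    der A c (.pt k₁ l₁) (.pt k₂ l₂) (.pt k₃ l₃) β 0 = 0 := by
  have hγ : Valid A (β + e k₁ l₁ + e k₂ l₂ + e k₃ l₃) :=
    ((hβ.add (valid_e v₁)).add (valid_e v₂)).add (valid_e v₃)
  rw [der_pt_pt_pt, mul_eq_zero]
  right
  by_cases h₁₂ : k₁ = k₂
  · exact hsep _ hγ k₂ k₃ l₂ l₃ (fun h₂₃ => h ⟨h₁₂, h₂₃⟩) v₂ v₃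
      (le_iff_exists_add.2 ⟨β + e k₁ l₁, by abel⟩)
  · exact hsep _ hγ k₁ k₂ l₁ l₂ h₁₂ v₁ v₂ (le_iff_exists_add.2 ⟨β + e k₃ l₃, by abel⟩)

lemma CubicValues.coeff_three_smul_eq_zero (hcub : CubicValues A c) {k : Fin 3} {l : ℕ}
    (v : ValidPt A (k, l)) (h : 3 * l ≠ A k) : c (3 • e k l) 0 = 0 := by
  have h6 := hcub.2 k l l l v v v
  rw [if_neg (by omega), sFactor, if_pos ⟨rfl, rfl⟩, mul_eq_zero] at h6
  rw [succ_nsmul, two_nsmul]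
  exact h6.resolve_left (by norm_num)

/-- The part of `Σ_{σ,τ} ∂_a∂_b∂_σF · η^{στ} · ∂_τ∂_d∂_e F` in which `σ` and `τ` run over the
`t_{i,j}`, taken at the coefficients of `t^x e^{y t_μ}` and `t^x' e^{y' t_μ}`. -/
noncomputable def ptContraction (A : Fin 3 → ℕ) (c : Expv → ℕ → ℂ) (a b d e' : Idx)
    (x : Expv) (y : ℕ) (x' : Expv) (y' : ℕ) : ℂ :=
  ∑ i : Fin 3, ∑ j ∈ Finset.Icc 1 (A i - 1),
    (A i : ℂ) * der A c a b (.pt i j) x y * der A c (.pt i (A i - j)) d e' x' y'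

lemma quadTerm_eq (a b d e' : Idx) (β : Expv) (m : ℕ) :
    quadTerm A c a b d e' β m =
      ∑ x ∈ Finset.HasAntidiagonal.antidiagonal β, ∑ y ∈ Finset.HasAntidiagonal.antidiagonal m,
        (der A c a b .one x.1 y.1 * der A c .mu d e' x.2 y.2
          + der A c a b .mu x.1 y.1 * der A c .one d e' x.2 y.2
          + ptContraction A c a b d e' x.1 y.1 x.2 y.2) :=
  rfl

lemma ptContraction_eq_single {a b d e' : Idx} {x x' : Expv} {y y' : ℕ} {k₀ : Fin 3} {l₀ : ℕ}
    (v₀ : ValidPt A (k₀, l₀))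
    (h : ∀ k l, ValidPt A (k, l) → (k, l) ≠ (k₀, l₀) → der A c a b (.pt k l) x y = 0) :
    ptContraction A c a b d e' x y x' y' =
      A k₀ * der A c a b (.pt k₀ l₀) x y * der A c (.pt k₀ (A k₀ - l₀)) d e' x' y' := by
  rw [ptContraction, Finset.sum_eq_single k₀,
    Finset.sum_eq_single_of_mem l₀ (Finset.mem_Icc.2 v₀)]
  · intro l hl hl₀
    rw [h k₀ l (Finset.mem_Icc.1 hl) (by simpa using hl₀), mul_zero, zero_mul]
  · intro k _ hk
    refine Finset.sum_eq_zero fun l hl => ?_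
    rw [h k l (Finset.mem_Icc.1 hl) (by simp [hk]), mul_zero, zero_mul]
  · simp

lemma ptContraction_eq_zero_of_left {a b d e' : Idx} {x x' : Expv} {y y' : ℕ}
    (h : ∀ k l, ValidPt A (k, l) → der A c a b (.pt k l) x y = 0) :
    ptContraction A c a b d e' x y x' y' = 0 :=
  Finset.sum_eq_zero fun k _ => Finset.sum_eq_zero fun l hl => by
    rw [h k l (Finset.mem_Icc.1 hl), mul_zero, zero_mul]

lemma ptContraction_eq_zero_of_right {a b d e' : Idx} {x x' : Expv} {y y' : ℕ}
    (h : ∀ k l, ValidPt A (k, l) → der A c (.pt k l) d e' x' y' = 0) :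
    ptContraction A c a b d e' x y x' y' = 0 :=
  Finset.sum_eq_zero fun k _ => Finset.sum_eq_zero fun l hl => by
    have hl := Finset.mem_Icc.1 hl
    rw [h k (A k - l) ⟨by omega, by dsimp only; omega⟩, mul_zero]

lemma quadTerm_one_eq_zero_of_separation (hsep : Separation A c) {β : Expv} (hβ : Valid A β)
    {k₁ k₂ k₃ k₄ : Fin 3} {l₁ l₂ l₃ l₄ : ℕ} (v₁ : ValidPt A (k₁, l₁)) (v₂ : ValidPt A (k₂, l₂))
    (v₃ : ValidPt A (k₃, l₃)) (v₄ : ValidPt A (k₄, l₄)) (h₁₂ : k₁ ≠ k₂) (h₃₄ : k₃ ≠ k₄) :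
    quadTerm A c (.pt k₁ l₁) (.pt k₂ l₂) (.pt k₃ l₃) (.pt k₄ l₄) β 1 = 0 := by
  rw [quadTerm_eq]
  refine Finset.sum_eq_zero fun x hx => ?_
  have hsum := Finset.HasAntidiagonal.mem_antidiagonal.1 hx
  have hx₁ : Valid A x.1 := hβ.mono (le_iff_exists_add.2 ⟨x.2, hsum.symm⟩)
  have hx₂ : Valid A x.2 := hβ.mono (le_iff_exists_add'.2 ⟨x.1, hsum.symm⟩)
  rw [show Finset.HasAntidiagonal.antidiagonal (1 : ℕ) = {(0, 1), (1, 0)} from rfl,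
    Finset.sum_pair (by decide)]
  simp only [der_pt_pt_one, der_one_left, eta_pt_pt_of_ne h₁₂, eta_pt_pt_of_ne h₃₄, ite_self,
    zero_mul, mul_zero, zero_add]
  rw [ptContraction_eq_zero_of_left fun k l v =>
      der_pt_pt_pt_eq_zero_of_separation hsep hx₁ v₁ v₂ v fun h => h₁₂ h.1,
    ptContraction_eq_zero_of_right fun k l v =>
      der_pt_pt_pt_eq_zero_of_separation hsep hx₂ v v₃ v₄ fun h => h₃₄ h.2,
    add_zero]

lemma quadTerm_pt_self_eq (hsep : Separation A c) (hcub : CubicValues A c) {i p q : Fin 3}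
    (hi : A i = 2) (vp : ValidPt A (p, 1)) (vq : ValidPt A (q, 1))
    (hip : i ≠ p) (hiq : i ≠ q) (hpq : p ≠ q) :
    quadTerm A c (.pt i 1) (.pt i 1) (.pt p 1) (.pt q 1) (e i 1) 1 =
      (1 / 2 + 48 * c (4 • e i 1) 0) * c (e i 1 + e p 1 + e q 1) 1 := by
  have vi : ValidPt A (i, 1) := validPt_one hi.ge
  have hleft : ∀ β, Valid A β → ∀ k l, ValidPt A (k, l) → (k, l) ≠ (i, 1) →
      der A c (.pt i 1) (.pt i 1) (.pt k l) β 0 = 0 := by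
    refine fun β hβ k l v hkl => der_pt_pt_pt_eq_zero_of_separation hsep hβ vi vi v ?_
    rintro ⟨-, rfl⟩
    obtain ⟨h₁, h₂⟩ := v
    exact hkl (Prod.ext rfl (by dsimp only at h₁ h₂; omega))
  have hright : ∀ β, Valid A β → ∀ k l, ValidPt A (k, l) →
      der A c (.pt k l) (.pt p 1) (.pt q 1) β 0 = 0 := fun β hβ k l v =>
    der_pt_pt_pt_eq_zero_of_separation hsep hβ v vp vq fun h => hpq h.2
  conv_lhs => rw [quadTerm_eq, show e i 1 = Finsupp.single (i, 1) 1 from rfl,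
    sum_antidiagonal_single_one]
  have hs : Valid A (Finsupp.single (i, 1) 1) := valid_e vi
  have hdfac₂ : dfac (Finsupp.single (i, 1) 1) [(p, 1), (q, 1)] = 1 :=
    dfac_eq_one (by simp [hpq]) (by simp [Finsupp.single_apply, hip, hiq])
  have hdfac₃ : dfac 0 [(i, 1), (p, 1), (q, 1)] = 1 :=
    dfac_eq_one (by simp [hip, hiq, hpq]) (by simp)
  have heta : eta A (.pt i 1) (.pt i 1) = 1 / 2 := by simp [eta, hi]
  rw [ptContraction_eq_zero_of_right (hright _ hs),
    ptContraction_eq_zero_of_right (hright _ valid_zero),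
    ptContraction_eq_single vi (hleft _ valid_zero), ptContraction_eq_single vi (hleft _ hs)]
  simp only [der_pt_pt_one, der_one_left, der_mu_pt_pt, der_pt_self, der_pt_pt_pt, heta, hi,
    hdfac₂, hdfac₃, hcub.coeff_three_smul_eq_zero vi (by omega), eta_pt_pt_of_ne hpq,
    one_ne_zero, and_false, and_true, if_false, ite_self, mul_zero, zero_mul, zero_add, add_zero]
  rw [show (Finsupp.single (i, 1) 1 : Expv) = e i 1 from rfl,
    show e i 1 + 3 • e i 1 = 4 • e i 1 from (succ_nsmul' _ 3).symm]
  simp only [if_true, e, Finsupp.single_eq_zero, one_ne_zero, if_false, Finsupp.single_eq_same]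
  norm_num [Nat.ascFactorial]
  ring

end

theorem coefficient_of_fourth_power_general (A : Fin 3 → ℕ) (hA01 : A 0 ≤ A 1) (hA12 : A 1 ≤ A 2)
    (c : Expv → ℕ → ℂ) (hadm : IsAdmissible A c) (hcub : CubicValues A c)
    (hnorm : Normalization A c) (hsep : Separation A c)
    (ha₁ : 2 ≤ A 0) (i : Fin 3) (hi : A i = 2) :
    c (4 • e i 1) 0 = -(1 / 96) := by
  have hv : ∀ k, ValidPt A (k, 1) := fun k => validPt_one (by fin_cases k <;> simp <;> omega)
  obtain ⟨p, q, hip, hiq, hpq⟩ : ∃ p q : Fin 3, i ≠ p ∧ i ≠ q ∧ p ≠ q := by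
    fin_cases i <;> decide
  have hN : c (e i 1 + e p 1 + e q 1) 1 = 1 := by
    rw [add_add_eq_sum_fin_three hip hiq hpq (e · 1), Fin.sum_univ_three]
    exact hnorm.1 ha₁
  have hwdvv := hadm.wdvv (.pt i 1) (.pt i 1) (.pt p 1) (.pt q 1) (hv i) (hv i) (hv p) (hv q)
    (e i 1) (valid_e (hv i)) 1
  rw [quadTerm_pt_self_eq hsep hcub hi (hv p) (hv q) hip hiq hpq, hN,
    quadTerm_one_eq_zero_of_separation hsep (valid_e (hv i)) (hv i) (hv p) (hv i) (hv q) hip hiq]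
    at hwdvv
  linear_combination hwdvv / 48

/-- Corollary 3.11. -/
theorem coefficient_of_fourth_power (A : Fin 3 → ℕ) (hA : ∀ i, 1 ≤ A i) (hA01 : A 0 ≤ A 1) (hA12 : A 1 ≤ A 2)
    (c : Expv → ℕ → ℂ) (hadm : IsAdmissible A c) (hcub : CubicValues A c)
    (hnorm : Normalization A c) (hsep : Separation A c)
    (ha₁ : 2 ≤ A 0) (i : Fin 3) (hi : A i = 2) :
    c (4 • e i 1) 0 = -(1 / 96) :=
  coefficient_of_fourth_power_general A hA01 hA12 c hadm hcub hnorm hsep ha₁ i hi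

end FrobeniusUniqueness
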